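/- arXiv:2406.03987 — 3 statements merged into one kernel-verified Lean document; each statement's English description precedes it below -/
import Mathlib

section
/- Nonemptiness of the Dhar set: Let d be a divisor on a connected weightless loopless multigraph G that is linearly equivalent to an effective divisor but is not itself effective, and let V₀ = {v ∈ V : d(v) < 0}. If n is such that the Dhar sequence satisfies V_{n+1} = V_n, then V_n ≠ V; that is, the Dhar set W = V \ V_n is nonempty. -/
/-!
Write `d = f + Δx` with `f` effective, where `(Δx)(v) = ∑ᵤ m(v,u) (x(v) - x(u))`. Let `M` be
the set of vertices where `x` is maximal. For `v ∈ M` every term of `(Δx)(v)` is nonnegative and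
each `u ∉ M` contributes at least `m(v,u)`, so `d(v)` is at least the number of edges from `v`
out of `M`. Hence no vertex of `M` is ever added to the Dhar sequence, and `M` is nonempty.
-/

open Finset

section Preliminaries

variable {V : Type} [Fintype V] [DecidableEq V]

/-- The degree of a divisor on a graph with vertex set `V`. -/
def degDiv (d : V → ℤ) : ℤ := ∑ v, d v

/-- A divisor is effective if it is nonnegative at every vertex. -/
def Effective (d : V → ℤ) : Prop := ∀ v, 0 ≤ d v

/-- The principal divisor `t_Z` associated to a subset `Z` of vertices, for the
graph with edge multiplicity function `m`. -/
def tZ (m : V → V → ℕ) (Z : Finset V) : V → ℤ := fun v =>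
  if v ∈ Z then -(∑ u ∈ Zᶜ, (m v u : ℤ)) else ∑ u ∈ Z, (m v u : ℤ)

/-- Two divisors are linearly equivalent if their difference lies in the subgroup
generated by the divisors `t_Z`. -/
def LinEquiv (m : V → V → ℕ) (d d' : V → ℤ) : Prop :=
  d - d' ∈ AddSubgroup.closure (Set.range (tZ m))

/-- The simple graph associated to an edge multiplicity function `m`
(an edge between distinct `u`, `v` whenever `m u v > 0`; loops are discarded). -/
def assocGraph (m : V → V → ℕ) : SimpleGraph V where
  Adj u v := u ≠ v ∧ (0 < m u v ∨ 0 < m v u)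
  symm := ⟨fun _ _ h => ⟨h.1.symm, h.2.symm⟩⟩
  loopless := ⟨fun _ h => h.1 rfl⟩

end Preliminaries

section Dhar

variable {V : Type} [Fintype V] [DecidableEq V]

/-- One step of the Dhar algorithm: add to `S` all vertices `v ∉ S` with
`∑_{u ∈ S} m v u > d v`. -/
def dharStep (m : V → V → ℕ) (d : V → ℤ) (S : Finset V) : Finset V :=
  S ∪ (Sᶜ.filter fun v => d v < ∑ u ∈ S, (m v u : ℤ))

/-- The Dhar sequence `V₀ ⊆ V₁ ⊆ V₂ ⊆ …` starting from `V₀`. -/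
def dharSeq (m : V → V → ℕ) (d : V → ℤ) (V0 : Finset V) : ℕ → Finset V
  | 0 => V0
  | n + 1 => dharStep m d (dharSeq m d V0 n)

end Dhar

section Laplacian

variable {V : Type} [Fintype V]

def laplacian (m : V → V → ℕ) : (V → ℤ) →+ (V → ℤ) where
  toFun x v := ∑ u, (m v u : ℤ) * (x v - x u)
  map_zero' := by ext; simp
  map_add' x y := by ext v; simp only [Pi.add_apply, ← sum_add_distrib]; congr 1; ext; ring

lemma laplacian_apply (m : V → V → ℕ) (x : V → ℤ) (v : V) :
    laplacian m x v = ∑ u, (m v u : ℤ) * (x v - x u) := rfl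

lemma tZ_eq_laplacian [DecidableEq V] (m : V → V → ℕ) (Z : Finset V) :
    tZ m Z = laplacian m (fun v => if v ∈ Z then -1 else 0) := by
  ext v
  have split : ∀ c : ℤ, ∑ u, (m v u : ℤ) * (c - if u ∈ Z then -1 else 0)
      = ∑ u ∈ Z, (m v u : ℤ) * (c + 1) + ∑ u ∈ Zᶜ, (m v u : ℤ) * c := fun c => by
    rw [← sum_add_sum_compl Z]
    congr 1 <;> refine sum_congr rfl fun u hu => ?_ <;> simp_all
  by_cases hv : v ∈ Z <;> simp [tZ, laplacian_apply, hv, split]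

lemma LinEquiv.exists_eq_add_laplacian [DecidableEq V] {m : V → V → ℕ} {d f : V → ℤ}
    (h : LinEquiv m d f) : ∃ x, d = f + laplacian m x := by
  have hle : AddSubgroup.closure (Set.range (tZ m)) ≤ (laplacian m).range := by
    rw [AddSubgroup.closure_le]
    rintro _ ⟨Z, rfl⟩
    exact ⟨_, (tZ_eq_laplacian m Z).symm⟩
  obtain ⟨x, hx⟩ := hle h
  exact ⟨x, by rw [hx, add_sub_cancel]⟩

lemma sum_le_laplacian_of_forall_le (m : V → V → ℕ) {x : V → ℤ} {v : V}
    (hmax : ∀ u, x u ≤ x v) (S : Finset V) (hS : ∀ u ∈ S, x u < x v) :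
    ∑ u ∈ S, (m v u : ℤ) ≤ laplacian m x v :=
  calc ∑ u ∈ S, (m v u : ℤ)
      ≤ ∑ u ∈ S, (m v u : ℤ) * (x v - x u) :=
        sum_le_sum fun u hu => le_mul_of_one_le_right (by positivity) (by linarith [hS u hu])
    _ ≤ ∑ u, (m v u : ℤ) * (x v - x u) :=
        sum_le_sum_of_subset_of_nonneg (subset_univ S) fun u _ _ =>
          mul_nonneg (by positivity) (sub_nonneg.mpr (hmax u))
    _ = laplacian m x v := rfl

end Laplacian

section Dhar

variable {V : Type} [Fintype V] [DecidableEq V] {m : V → V → ℕ} {d : V → ℤ} {M : Finset V}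

lemma dharStep_subset_compl (hM : ∀ v ∈ M, ∑ u ∈ Mᶜ, (m v u : ℤ) ≤ d v) {S : Finset V}
    (hS : S ⊆ Mᶜ) : dharStep m d S ⊆ Mᶜ := by
  refine union_subset hS fun v hv => mem_compl.mpr fun hvM => ?_
  have hburn := (mem_filter.mp hv).2
  have hsub : ∑ u ∈ S, (m v u : ℤ) ≤ ∑ u ∈ Mᶜ, (m v u : ℤ) :=
    sum_le_sum_of_subset_of_nonneg hS fun _ _ _ => by positivity
  linarith [hM v hvM]

lemma dharSeq_subset_compl (hM : ∀ v ∈ M, ∑ u ∈ Mᶜ, (m v u : ℤ) ≤ d v) {V0 : Finset V}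
    (h0 : V0 ⊆ Mᶜ) : ∀ i, dharSeq m d V0 i ⊆ Mᶜ
  | 0 => h0
  | i + 1 => dharStep_subset_compl hM (dharSeq_subset_compl hM h0 i)

end Dhar

theorem dhar_set_nonempty_general {V : Type} [Fintype V] [DecidableEq V]
    (m : V → V → ℕ)
    (d : V → ℤ) (heff : ∃ f : V → ℤ, Effective f ∧ LinEquiv m d f)
    (hne : ¬ Effective d) (n : ℕ) :
    dharSeq m d (univ.filter fun v => d v < 0) n ≠ univ := by
  obtain ⟨f, hf, hlin⟩ := heff
  obtain ⟨x, rfl⟩ := hlin.exists_eq_add_laplacian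
  have : Nonempty V := not_forall.mp hne |>.nonempty
  obtain ⟨v0, -, hv0⟩ := exists_max_image univ x univ_nonempty
  set M := univ.filter fun v => x v = x v0
  have hM : ∀ v ∈ M, ∑ u ∈ Mᶜ, (m v u : ℤ) ≤ (f + laplacian m x) v := by
    intro v hv
    have hxv : x v = x v0 := (mem_filter.mp hv).2
    have hlap := sum_le_laplacian_of_forall_le m (fun u => hxv ▸ hv0 u (mem_univ u)) Mᶜ
      fun u hu => hxv ▸ lt_of_le_of_ne (hv0 u (mem_univ u)) (by simpa [M] using hu)
    linarith [hf v, Pi.add_apply f (laplacian m x) v]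
  have h0 : (univ.filter fun v => (f + laplacian m x) v < 0) ⊆ Mᶜ := fun v hv =>
    mem_compl.mpr fun hvM => (mem_filter.mp hv).2.not_ge <|
      (sum_nonneg fun _ _ => by positivity).trans (hM v hvM)
  intro hV
  exact mem_compl.mp (dharSeq_subset_compl hM h0 n (hV ▸ mem_univ v0)) (by simp [M])

/-- **Nonemptiness of the Dhar set.** -/
theorem dhar_set_nonempty {V : Type} [Fintype V] [DecidableEq V]
    (m : V → V → ℕ) (hsymm : ∀ u v, m u v = m v u) (hloop : ∀ v, m v v = 0)
    (hconn : (assocGraph m).Connected)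
    (d : V → ℤ) (heff : ∃ f : V → ℤ, Effective f ∧ LinEquiv m d f)
    (hne : ¬ Effective d) (n : ℕ)
    (hstab : dharSeq m d (univ.filter fun v => d v < 0) (n + 1)
        = dharSeq m d (univ.filter fun v => d v < 0) n) :
    dharSeq m d (univ.filter fun v => d v < 0) n ≠ univ :=
  dhar_set_nonempty_general m d heff hne n
end

section
/- Dhar algorithm exhausts the graph for reduced divisors: Let W ⊆ V be a nonempty set of vertices of a connected weightless loopless multigraph G and let d be a W-reduced divisor. If n is such that the Dhar sequence with V₀ = W satisfies V_{n+1} = V_n, then V_n = V. -/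
open Finset

section Reduced

variable {V : Type} [Fintype V] [DecidableEq V]

/-- A divisor `d` is `W`-reduced if it is nonnegative away from `W`, and every
nonempty subset `A` of `V \ W` contains a vertex `v` with
`d v < ∑_{u ∉ A} m v u`. -/
def WReduced (m : V → V → ℕ) (W : Finset V) (d : V → ℤ) : Prop :=
  (∀ v, v ∉ W → 0 ≤ d v) ∧
    ∀ A : Finset V, A.Nonempty → (∀ v ∈ A, v ∉ W) →
      ∃ v ∈ A, d v < ∑ u ∈ Aᶜ, (m v u : ℤ)

end Reduced

section Burning

variable {V : Type} [Fintype V] [DecidableEq V] {m : V → V → ℕ} {d : V → ℤ}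

theorem subset_dharStep (S : Finset V) : S ⊆ dharStep m d S :=
  subset_union_left

theorem mem_dharStep_of_lt {S : Finset V} {v : V} (hv : v ∉ S)
    (hburn : d v < ∑ u ∈ S, (m v u : ℤ)) : v ∈ dharStep m d S :=
  mem_union_right _ (mem_filter.mpr ⟨mem_compl.mpr hv, hburn⟩)

theorem subset_dharSeq (V0 : Finset V) : ∀ n, V0 ⊆ dharSeq m d V0 n
  | 0 => subset_rfl
  | n + 1 => (subset_dharSeq V0 n).trans (subset_dharStep _)

/-- Reducedness applied to `A = Sᶜ` produces a vertex outside `S` that the next step burns. -/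
theorem eq_univ_of_dharStep_eq {W S : Finset V} (hred : WReduced m W d) (hWS : W ⊆ S)
    (hfix : dharStep m d S = S) : S = univ := by
  by_contra hne
  have hcompl : Sᶜ.Nonempty := by
    rwa [nonempty_iff_ne_empty, Ne, compl_eq_empty_iff]
  obtain ⟨v, hvS, hburn⟩ :=
    hred.2 Sᶜ hcompl fun v hv hvW => mem_compl.mp hv (hWS hvW)
  rw [compl_compl] at hburn
  have hv : v ∉ S := mem_compl.mp hvS
  exact hv (hfix ▸ mem_dharStep_of_lt hv hburn)

end Burning

theorem dhar_exhausts_reduced_general {V : Type} [Fintype V] [DecidableEq V]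
    (m : V → V → ℕ)
    (W : Finset V) (d : V → ℤ) (hred : WReduced m W d)
    (n : ℕ) (hstab : dharSeq m d W (n + 1) = dharSeq m d W n) :
    dharSeq m d W n = univ :=
  eq_univ_of_dharStep_eq hred (subset_dharSeq W n) hstab

/-- **The Dhar algorithm exhausts the graph for reduced divisors.** -/
theorem dhar_exhausts_reduced {V : Type} [Fintype V] [DecidableEq V]
    (m : V → V → ℕ) (hsymm : ∀ u v, m u v = m v u) (hloop : ∀ v, m v v = 0)
    (hconn : (assocGraph m).Connected)
    (W : Finset V) (hW : W.Nonempty) (d : V → ℤ) (hred : WReduced m W d)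
    (n : ℕ) (hstab : dharSeq m d W (n + 1) = dharSeq m d W n) :
    dharSeq m d W n = univ :=
  dhar_exhausts_reduced_general m W d hred n hstab
end

section
/- Lower bound criterion for the rank on weighted graphs: Let G be a connected weighted graph (possibly with loops), let d be a divisor on G, and let s ≥ 0 be an integer. For a vertex v set g(v) = ω(v) + m(v,v), and for an effective divisor e on G define the effective divisor e^deg by e^deg(v) = e(v) + min(e(v), g(v)). If for every effective divisor e on G of degree s the divisor d − e^deg is linearly equivalent (on G) to an effective divisor, then r_G(d) ≥ s, where r_G is the rank defined via the associated weightless loopless graph G^•. -/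
open Finset

section Rank

variable {V : Type} [Fintype V] [DecidableEq V]

/-- The set of integers `k` such that either `k = -1`, or `k ≥ 0` and for every
effective divisor `e` of degree `k`, the divisor `d - e` is linearly equivalent
to an effective divisor. -/
def bnRankSet (m : V → V → ℕ) (d : V → ℤ) : Set ℤ :=
  {k : ℤ | k = -1 ∨ (0 ≤ k ∧ ∀ e : V → ℤ, Effective e → degDiv e = k →
      ∃ f : V → ℤ, Effective f ∧ LinEquiv m (d - e) f)}

/-- The Baker–Norine rank of a divisor `d` on the weightless loopless multigraph
with edge multiplicity function `m`. -/
noncomputable def bnRank (m : V → V → ℕ) (d : V → ℤ) : ℤ := sSup (bnRankSet m d)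

end Rank

section Bullet

variable {V : Type} [Fintype V] [DecidableEq V]

/-- The vertex set of the associated weightless loopless graph `G^•`:
the original vertices together with `ω v + m v v` new vertices for each `v`. -/
abbrev BV (ω : V → ℕ) (m : V → V → ℕ) : Type := V ⊕ (Σ v : V, Fin (ω v + m v v))

/-- The edge multiplicity function of the associated weightless loopless graph `G^•`. -/
def bulletM (ω : V → ℕ) (m : V → V → ℕ) : BV ω m → BV ω m → ℕ
  | Sum.inl u, Sum.inl v => if u = v then 0 else m u v
  | Sum.inl u, Sum.inr ⟨v, _⟩ => if u = v then 2 else 0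
  | Sum.inr ⟨u, _⟩, Sum.inl v => if u = v then 2 else 0
  | Sum.inr _, Sum.inr _ => 0

/-- The extension-by-zero of a divisor on `G` to a divisor on `G^•`. -/
def iota (ω : V → ℕ) (m : V → V → ℕ) (d : V → ℤ) : BV ω m → ℤ
  | Sum.inl v => d v
  | Sum.inr _ => 0

/-- The rank of a divisor on a weighted graph with loops, defined as the
Baker–Norine rank of its extension by zero to `G^•`. -/
noncomputable def wRank (ω : V → ℕ) (m : V → V → ℕ) (d : V → ℤ) : ℤ :=
  bnRank (bulletM ω m) (iota ω m d)

end Bullet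

section EDeg

variable {V : Type} [Fintype V] [DecidableEq V]

/-- For an effective divisor `e`, the effective divisor `e^deg` defined by
`e^deg(v) = e(v) + min (e(v)) (g(v))` where `g(v) = ω(v) + m(v,v)`. -/
def edeg (ω : V → ℕ) (m : V → V → ℕ) (e : V → ℤ) : V → ℤ :=
  fun v => e v + min (e v) ((ω v + m v v : ℕ) : ℤ)

end EDeg

/-!
Let `E` be an effective divisor of degree `s` on `G^•` and `e` its pushforward to `G`, which
collapses each new vertex `(v, i)` onto `v`. By hypothesis `d - e^deg` is equivalent to an
effective `f` on `G`, and this equivalence lifts to `G^•`: a cut of `G` lifted to `G^•` is crossed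
only by the edges of `G`. It remains to move `ι(e^deg) - E` to an effective divisor on `G^•`.
Firing the new vertex `(v, i)` `⌈E(v, i) / 2⌉` times along its double edge to `v` removes `E`
there at the cost of `E(v, i) + E(v, i) % 2` at `v`. At most `min (e v) (g v)` of these parities
are odd, and this is exactly the extra term of `e^deg(v)`.
-/

section Divisors

variable {V : Type} [Fintype V] [DecidableEq V] {m : V → V → ℕ}

lemma tZ_apply_eq_sum (Z : Finset V) (v : V) :
    tZ m Z v = ∑ u, ((if u ∈ Z then 1 else 0) - (if v ∈ Z then 1 else 0)) * (m v u : ℤ) := by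
  by_cases hv : v ∈ Z
  · simp [tZ, hv, sub_mul, Finset.sum_sub_distrib, ite_mul, Finset.sum_ite_mem,
      Finset.compl_eq_univ_sdiff, Finset.sum_sdiff_eq_sub]
  · simp [tZ, hv, ite_mul, Finset.sum_ite_mem]

/-- The double sum of `tZ_apply_eq_sum` changes sign when `u` and `v` are swapped. -/
lemma degDiv_tZ (hsymm : ∀ u v, m u v = m v u) (Z : Finset V) : degDiv (tZ m Z) = 0 := by
  set χ : V → ℤ := fun v => if v ∈ Z then 1 else 0
  have hswap : ∑ v, ∑ u, (χ u - χ v) * (m v u : ℤ) = ∑ v, ∑ u, (χ v - χ u) * (m v u : ℤ) := by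
    rw [Finset.sum_comm]
    simp only [hsymm]
  have hanti : ∑ v, ∑ u, (χ v - χ u) * (m v u : ℤ) = -∑ v, ∑ u, (χ u - χ v) * (m v u : ℤ) := by
    simp only [← Finset.sum_neg_distrib, ← neg_mul, neg_sub]
  simp only [degDiv, tZ_apply_eq_sum]
  linarith

def degDivHom : (V → ℤ) →+ ℤ := AddMonoidHom.mk' degDiv fun _ _ => Finset.sum_add_distrib

lemma LinEquiv.degDiv_eq (hsymm : ∀ u v, m u v = m v u) {d d' : V → ℤ} (h : LinEquiv m d d') :
    degDiv d = degDiv d' := by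
  have hker : AddSubgroup.closure (Set.range (tZ m)) ≤ (degDivHom (V := V)).ker := by
    rw [AddSubgroup.closure_le]
    rintro _ ⟨Z, rfl⟩
    exact degDiv_tZ hsymm Z
  have := hker h
  rwa [AddMonoidHom.mem_ker, map_sub, sub_eq_zero] at this

lemma LinEquiv.add {a b c d : V → ℤ} (hab : LinEquiv m a b) (hcd : LinEquiv m c d) :
    LinEquiv m (a + c) (b + d) := by
  unfold LinEquiv at *
  rw [add_sub_add_comm]
  exact add_mem hab hcd

lemma bddAbove_bnRankSet [Nonempty V] (hsymm : ∀ u v, m u v = m v u) (d : V → ℤ) :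
    BddAbove (bnRankSet m d) := by
  refine ⟨max (degDiv d) (-1), ?_⟩
  rintro k (rfl | ⟨hk, hrank⟩)
  · exact le_max_right _ _
  obtain ⟨v⟩ := ‹Nonempty V›
  have hdeg : degDiv (Pi.single v k : V → ℤ) = k := by simp [degDiv]
  obtain ⟨f, hf, hlin⟩ := hrank (Pi.single v k) (fun w => by
    by_cases hw : w = v <;> simp [hw, hk]) hdeg
  have hdeg_eq := hlin.degDiv_eq hsymm
  have hsub : degDiv (d - Pi.single v k) = degDiv d - k := by
    simp [degDiv, Finset.sum_sub_distrib]
  have hf_deg : 0 ≤ degDiv f := Finset.sum_nonneg fun w _ => hf w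
  omega

lemma le_bnRank [Nonempty V] (hsymm : ∀ u v, m u v = m v u) {d : V → ℤ} {k : ℤ}
    (hk : k ∈ bnRankSet m d) : k ≤ bnRank m d :=
  le_csSup (bddAbove_bnRankSet hsymm d) hk

end Divisors

lemma sum_emod_two_le_min {ι : Type} [Fintype ι] (x : ι → ℤ) (hx : ∀ i, 0 ≤ x i) :
    ∑ i, x i % 2 ≤ min (∑ i, x i) (Fintype.card ι) := by
  refine le_min (Finset.sum_le_sum fun i _ => ?_) ?_
  · have := hx i
    omega
  · calc ∑ i, x i % 2 ≤ ∑ _i : ι, (1 : ℤ) := Finset.sum_le_sum fun i _ => by omega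
      _ = Fintype.card ι := by simp

section BulletGraph

variable {V : Type} [DecidableEq V] (ω : V → ℕ) (m : V → V → ℕ)

lemma bulletM_symm (hsymm : ∀ u v, m u v = m v u) (a b : BV ω m) :
    bulletM ω m a b = bulletM ω m b a := by
  rcases a with u | ⟨u, i⟩ <;> rcases b with v | ⟨v, j⟩ <;>
    simp [bulletM, eq_comm, hsymm u v]

def iotaHom : (V → ℤ) →+ (BV ω m → ℤ) where
  toFun := iota ω m
  map_zero' := by funext w; cases w <;> rfl
  map_add' _ _ := by funext w; cases w <;> rfl

def bulletProj : BV ω m → V := Sum.elim id Sigma.fst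

variable [Fintype V]

def bulletLift (Z : Finset V) : Finset (BV ω m) := univ.filter fun w => bulletProj ω m w ∈ Z

@[simp]
lemma mem_bulletLift {Z : Finset V} {w : BV ω m} :
    w ∈ bulletLift ω m Z ↔ bulletProj ω m w ∈ Z := by
  simp [bulletLift]

/-- A new vertex lies on the same side of `bulletLift Z` as its only neighbour, so only the edges
of `G` cross the cut. -/
lemma tZ_bulletLift (Z : Finset V) :
    tZ (bulletM ω m) (bulletLift ω m Z) = iota ω m (tZ m Z) := by
  funext w
  rw [tZ_apply_eq_sum, Fintype.sum_sum_type]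
  rcases w with u | ⟨u, i⟩
  · rw [iota, tZ_apply_eq_sum]
    simp only [mem_bulletLift, bulletProj, Sum.elim_inl, Sum.elim_inr, id, bulletM]
    rw [add_eq_left.mpr (Finset.sum_eq_zero fun p _ => ?_)]
    · exact Finset.sum_congr rfl fun v _ => by split_ifs <;> simp_all
    · split_ifs <;> simp_all
  · simp [bulletProj, bulletM, iota]

lemma LinEquiv.bullet_iota {d d' : V → ℤ} (h : LinEquiv m d d') :
    LinEquiv (bulletM ω m) (iota ω m d) (iota ω m d') := by
  have hmap := AddSubgroup.mem_map_of_mem (iotaHom ω m) h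
  rw [AddMonoidHom.map_closure, map_sub] at hmap
  refine AddSubgroup.closure_mono ?_ hmap
  rintro _ ⟨_, ⟨Z, rfl⟩, rfl⟩
  exact ⟨bulletLift ω m Z, tZ_bulletLift ω m Z⟩

lemma tZ_bulletM_singleton_inr (p : Σ v, Fin (ω v + m v v)) :
    tZ (bulletM ω m) {Sum.inr p} =
      Sum.elim (fun v => if v = p.1 then 2 else 0) (fun q => if q = p then -2 else 0) := by
  funext w
  rcases w with v | q
  · simp [tZ_apply_eq_sum, bulletM]
  · simp [tZ_apply_eq_sum, bulletM, apply_ite Neg.neg]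

/-- The divisor `∑ p, k p • t_{p}` obtained by firing each new vertex `p` of `G^•`, `k p` times. -/
def newFiring (k : (Σ v, Fin (ω v + m v v)) → ℤ) : BV ω m → ℤ :=
  Sum.elim (fun v => 2 * ∑ i, k ⟨v, i⟩) (fun p => -(2 * k p))

lemma newFiring_mem_closure (k : (Σ v, Fin (ω v + m v v)) → ℤ) :
    newFiring ω m k ∈ AddSubgroup.closure (Set.range (tZ (bulletM ω m))) := by
  have hsum : newFiring ω m k = ∑ p, k p • tZ (bulletM ω m) {Sum.inr p} := by
    funext w
    rcases w with v | q
    · simp [newFiring, tZ_bulletM_singleton_inr, Finset.mul_sum, Fintype.sum_sigma,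
        Finset.sum_ite_irrel, mul_comm]
    · simp [newFiring, tZ_bulletM_singleton_inr, mul_comm]
  rw [hsum]
  exact AddSubgroup.sum_mem _ fun p _ =>
    AddSubgroup.zsmul_mem _ (AddSubgroup.subset_closure (Set.mem_range_self _)) _

end BulletGraph

section Pushforward

variable {V : Type} (ω : V → ℕ) (m : V → V → ℕ)

def bulletPush (E : BV ω m → ℤ) : V → ℤ := fun v => E (Sum.inl v) + ∑ i, E (Sum.inr ⟨v, i⟩)

variable {ω m}

lemma Effective.bulletPush {E : BV ω m → ℤ} (hE : Effective E) : Effective (bulletPush ω m E) :=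
  fun _ => add_nonneg (hE _) (Finset.sum_nonneg fun _ _ => hE _)

lemma Effective.iota {f : V → ℤ} (hf : Effective f) : Effective (iota ω m f) := by
  rintro (v | p)
  exacts [hf v, le_rfl]

variable [Fintype V]

lemma degDiv_bulletPush (E : BV ω m → ℤ) : degDiv (bulletPush ω m E) = degDiv E := by
  simp [degDiv, bulletPush, Fintype.sum_sum_type, Fintype.sum_sigma, Finset.sum_add_distrib]

variable [DecidableEq V]

lemma exists_effective_linEquiv_iota_edeg_bulletPush_sub {E : BV ω m → ℤ} (hE : Effective E) :
    ∃ D, Effective D ∧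
      LinEquiv (bulletM ω m) (iota ω m (edeg ω m (bulletPush ω m E)) - E) D := by
  set k : (Σ v, Fin (ω v + m v v)) → ℤ := fun p => (E (Sum.inr p) + 1) / 2
  refine ⟨iota ω m (edeg ω m (bulletPush ω m E)) - E - newFiring ω m k, ?_, ?_⟩
  · rintro (v | p)
    · have hpar := sum_emod_two_le_min (fun i => E (Sum.inr ⟨v, i⟩)) fun _ => hE _
      have hk : ∀ i, 2 * k ⟨v, i⟩ = E (Sum.inr ⟨v, i⟩) + E (Sum.inr ⟨v, i⟩) % 2 := fun i => by
        have := hE (Sum.inr ⟨v, i⟩)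
        simp only [k]
        omega
      simp only [Pi.sub_apply, iota, newFiring, Sum.elim_inl, edeg, bulletPush, Finset.mul_sum, hk,
        Finset.sum_add_distrib, Fintype.card_fin] at hpar ⊢
      push_cast at hpar ⊢
      linarith [hpar.trans (min_le_min_right _ (le_add_of_nonneg_left (hE (Sum.inl v))))]
    · have := hE (Sum.inr p)
      simp only [Pi.sub_apply, iota, newFiring, Sum.elim_inr, k]
      omega
  · show _ - (_ - _) ∈ _
    rw [sub_sub_cancel]
    exact newFiring_mem_closure ω m k

lemma mem_bnRankSet_bulletM_iota {d : V → ℤ} {s : ℤ} (hs : 0 ≤ s)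
    (h : ∀ e : V → ℤ, Effective e → degDiv e = s →
      ∃ f : V → ℤ, Effective f ∧ LinEquiv m (d - edeg ω m e) f) :
    s ∈ bnRankSet (bulletM ω m) (iota ω m d) := by
  refine Or.inr ⟨hs, fun E hE hdeg => ?_⟩
  obtain ⟨f, hf, hdf⟩ := h _ hE.bulletPush ((degDiv_bulletPush E).trans hdeg)
  obtain ⟨D, hD, hED⟩ := exists_effective_linEquiv_iota_edeg_bulletPush_sub hE
  refine ⟨iota ω m f + D, fun w => add_nonneg (hf.iota w) (hD w), ?_⟩
  have := (hdf.bullet_iota ω).add hED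
  rwa [show iota ω m (d - edeg ω m (bulletPush ω m E)) =
      iota ω m d - iota ω m (edeg ω m (bulletPush ω m E)) from map_sub (iotaHom ω m) _ _,
    sub_add_sub_cancel] at this

end Pushforward

/-- **Lower bound criterion for the rank on weighted graphs.** -/
theorem wRank_lower_bound {V : Type} [Fintype V] [DecidableEq V]
    (ω : V → ℕ) (m : V → V → ℕ) (hsymm : ∀ u v, m u v = m v u)
    (hconn : (assocGraph m).Connected)
    (d : V → ℤ) (s : ℤ) (hs : 0 ≤ s)
    (h : ∀ e : V → ℤ, Effective e → degDiv e = s →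
      ∃ f : V → ℤ, Effective f ∧ LinEquiv m (d - edeg ω m e) f) :
    s ≤ wRank ω m d := by
  have : Nonempty V := hconn.nonempty
  exact le_bnRank (bulletM_symm ω m hsymm) (mem_bnRankSet_bulletM_iota hs h)
end
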